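/- arXiv:2008.03026 — 7 statements merged into one kernel-verified Lean document; each statement's English description precedes it below -/
import Mathlib

section
/- With the definitions of F_0 and F_∞ as before, F_∞(ρ) = F_0(ρ) if and only if ρ is the thermal-like distribution on its support, i.e. ρ_i = e^{-βE_i} / Σ_{j∈supp(ρ)} e^{-βE_j} for all i ∈ supp(ρ). -/
/-- Single-shot free energy `F₀`: `-β⁻¹ log Σ_{i ∈ supp ρ} e^{-β E_i}`. -/
noncomputable def F0 {d : ℕ} (β : ℝ) (E ρ : Fin d → ℝ) : ℝ :=
  -β⁻¹ * Real.log (∑ i, if 0 < ρ i then Real.exp (-β * E i) else 0)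

/-- Single-shot free energy `F∞`: `β⁻¹ log max_{i ∈ supp ρ} ρ_i e^{β E_i}`. -/
noncomputable def Finf {d : ℕ} (β : ℝ) (E ρ : Fin d → ℝ) : ℝ :=
  β⁻¹ * Real.log (sSup ((fun i => ρ i * Real.exp (β * E i)) '' {i | 0 < ρ i}))

/-- `F∞(ρ) = F₀(ρ)` iff `ρ` is the thermal-like (Gibbs) distribution on its support. -/
theorem Finf_eq_F0_iff_thermal_like {d : ℕ} (β : ℝ) (E ρ : Fin d → ℝ) (hβ : 0 < β)
    (hρ : ∀ i, 0 ≤ ρ i) (hsum : ∑ i, ρ i = 1) :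
    Finf β E ρ = F0 β E ρ ↔
      ∀ i, 0 < ρ i →
        ρ i = Real.exp (-β * E i) / (∑ j, if 0 < ρ j then Real.exp (-β * E j) else 0) := by
  classical
  set S : Finset (Fin d) := Finset.univ.filter (fun i => 0 < ρ i) with hS
  have hmem : ∀ i, i ∈ S ↔ 0 < ρ i := by intro i; simp [hS]
  have hZdef : (∑ i, if 0 < ρ i then Real.exp (-β * E i) else 0)
      = ∑ i ∈ S, Real.exp (-β * E i) := (Finset.sum_filter _ _).symm
  set Z := ∑ i ∈ S, Real.exp (-β * E i) with hZ
  have hex : ∃ i, 0 < ρ i := by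
    by_contra h
    push_neg at h
    have h0 : ∀ i, ρ i = 0 := fun i => le_antisymm (h i) (hρ i)
    simp [h0] at hsum
  obtain ⟨i₀, hi₀⟩ := hex
  have hSne : S.Nonempty := ⟨i₀, (hmem i₀).2 hi₀⟩
  have hZpos : 0 < Z := Finset.sum_pos (fun i _ => Real.exp_pos _) hSne
  set A : Set ℝ := (fun i => ρ i * Real.exp (β * E i)) '' {i | 0 < ρ i} with hA
  have hAfin : A.Finite := Set.toFinite A
  have hAne : A.Nonempty := ⟨_, ⟨i₀, hi₀, rfl⟩⟩
  have hMmem : sSup A ∈ A := hAne.csSup_mem hAfin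
  have hMub : ∀ x ∈ A, x ≤ sSup A := fun x hx => le_csSup hAfin.bddAbove hx
  have hMpos : 0 < sSup A := by
    obtain ⟨i, hi, hieq⟩ := hMmem
    rw [← hieq]
    exact mul_pos hi (Real.exp_pos _)
  have hsumS : ∑ i ∈ S, ρ i = 1 := by
    rw [← hsum]
    apply Finset.sum_subset (Finset.subset_univ S)
    intro x _ hx
    have hx' : ¬ 0 < ρ x := by simpa [hmem] using hx
    linarith [hρ x]
  have hβ' : (β : ℝ)⁻¹ ≠ 0 := inv_ne_zero hβ.ne'
  constructor
  · intro hF i hi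
    have hlog : Real.log (sSup A) = Real.log Z⁻¹ := by
      unfold Finf F0 at hF
      rw [hZdef, ← hA] at hF
      rw [Real.log_inv]
      have := mul_left_cancel₀ hβ' (by linarith [hF] : β⁻¹ * Real.log (sSup A) = β⁻¹ * (-Real.log Z))
      linarith [this]
    have hM : sSup A = Z⁻¹ := by
      have := congrArg Real.exp hlog
      rwa [Real.exp_log hMpos, Real.exp_log (inv_pos.mpr hZpos)] at this
    have hle : ∀ j ∈ S, ρ j ≤ Z⁻¹ * Real.exp (-β * E j) := by
      intro j hj
      have h1 : ρ j * Real.exp (β * E j) ≤ Z⁻¹ := hM ▸ hMub _ ⟨j, (hmem j).1 hj, rfl⟩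
      have h2 := mul_le_mul_of_nonneg_right h1 (Real.exp_pos (-β * E j)).le
      rwa [mul_assoc, ← Real.exp_add, show β * E j + -β * E j = 0 by ring, Real.exp_zero, mul_one] at h2
    have hsumeq : ∑ j ∈ S, ρ j = ∑ j ∈ S, Z⁻¹ * Real.exp (-β * E j) := by
      rw [hsumS, ← Finset.mul_sum, ← hZ, inv_mul_cancel₀ hZpos.ne']
    have heq := (Finset.sum_eq_sum_iff_of_le hle).mp hsumeq i ((hmem i).2 hi)
    rw [hZdef, heq]
    ring
  · intro h
    have hconst : ∀ i, 0 < ρ i → ρ i * Real.exp (β * E i) = Z⁻¹ := by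
      intro i hi
      rw [h i hi, hZdef, div_mul_eq_mul_div, ← Real.exp_add,
        show -β * E i + β * E i = 0 by ring, Real.exp_zero, one_div]
    have hAeq : A = {Z⁻¹} := by
      apply Set.eq_singleton_iff_nonempty_unique_mem.mpr
      refine ⟨hAne, ?_⟩
      rintro x ⟨i, hi, rfl⟩
      exact hconst i hi
    unfold Finf F0
    rw [← hA, hAeq, csSup_singleton, hZdef, Real.log_inv]
    ring
end

section
/- Let σ be the reversible (thermal-like) state on a support S ⊆ {1,...,d}, σ_i = e^{-βE_i}/Z_S for i ∈ S with Z_S = Σ_{j∈S} e^{-βE_j}, and zero otherwise. Then for any state ρ with supp(ρ) = S and ρ ≠ σ, F_∞(ρ) > F_∞(σ), i.e. the reversible state is the unique minimizer of the work of formation among states with given support. -/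
/-- The reversible (thermal-like) state on a support `S` is the unique minimizer of the
work of formation among states with support `S`: any other state `ρ` with the same
support has strictly larger `F∞`. -/
theorem reversible_state_unique_min_Finf {d : ℕ} (β : ℝ) (E : Fin d → ℝ) (hβ : 0 < β)
    (S : Finset (Fin d)) (hS : S.Nonempty)
    (ZS : ℝ) (hZS : ZS = ∑ i ∈ S, Real.exp (-β * E i))
    (σ : Fin d → ℝ) (hσ : σ = fun i => if i ∈ S then Real.exp (-β * E i) / ZS else 0)
    (ρ : Fin d → ℝ) (hρ : ∀ i, 0 ≤ ρ i) (hsum : ∑ i, ρ i = 1)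
    (hsupp : ∀ i, 0 < ρ i ↔ i ∈ S) (hne : ρ ≠ σ) :
    Finf β E σ < Finf β E ρ := by
  have hZpos : 0 < ZS := by
    rw [hZS]
    exact Finset.sum_pos (fun i _ => Real.exp_pos _) hS
  -- σ is positive exactly on S
  have hσval : ∀ i ∈ S, σ i = Real.exp (-β * E i) / ZS := by
    intro i hi; simp [hσ, hi]
  have hσzero : ∀ i ∉ S, σ i = 0 := by
    intro i hi; simp [hσ, hi]
  have hσpos : ∀ i, 0 < σ i ↔ i ∈ S := by
    intro i
    by_cases hi : i ∈ S
    · simp [hσval i hi, hi, div_pos (Real.exp_pos _) hZpos]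
    · simp [hσzero i hi, hi]
  -- sums over S
  have hρS : ∑ i ∈ S, ρ i = 1 := by
    rw [← hsum]
    apply Finset.sum_subset (Finset.subset_univ S)
    intro i _ hi
    exact le_antisymm (le_of_not_gt fun h => hi ((hsupp i).mp h)) (hρ i)
  have hσS : ∑ i ∈ S, σ i = 1 := by
    have : ∑ i ∈ S, σ i = (∑ i ∈ S, Real.exp (-β * E i)) / ZS := by
      rw [Finset.sum_div]
      exact Finset.sum_congr rfl hσval
    rw [this, ← hZS, div_self (ne_of_gt hZpos)]
  -- there is i₀ ∈ S with σ i₀ < ρ i₀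
  obtain ⟨i₀, hi₀S, hi₀⟩ : ∃ i ∈ S, σ i < ρ i := by
    by_contra h
    push_neg at h
    -- ρ = σ pointwise
    apply hne
    funext i
    by_cases hi : i ∈ S
    · by_contra hne'
      have hlt : ρ i < σ i := lt_of_le_of_ne (h i hi) hne'
      have : ∑ j ∈ S, ρ j < ∑ j ∈ S, σ j :=
        Finset.sum_lt_sum (fun j hj => h j hj) ⟨i, hi, hlt⟩
      rw [hρS, hσS] at this
      exact lt_irrefl _ this
    · rw [hσzero i hi]
      have := hρ i
      have h2 := (hsupp i).not.mpr hi
      rcases lt_or_eq_of_le this with h3 | h3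
      · exact absurd h3 h2
      · exact h3.symm
  -- compute Finf σ
  have hσset : {i : Fin d | 0 < σ i} = ↑S := by
    ext i; simp [hσpos i]
  have hσimage : (fun i => σ i * Real.exp (β * E i)) '' {i | 0 < σ i} = {ZS⁻¹} := by
    rw [hσset]
    apply Set.eq_singleton_iff_nonempty_unique_mem.mpr
    constructor
    · exact ⟨σ hS.choose * Real.exp (β * E hS.choose), ⟨hS.choose, hS.choose_spec, rfl⟩⟩
    · rintro x ⟨i, hi, rfl⟩
      have hi' : i ∈ S := hi
      show σ i * Real.exp (β * E i) = ZS⁻¹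
      rw [hσval i hi', div_mul_eq_mul_div, ← Real.exp_add]
      have : -β * E i + β * E i = 0 := by ring
      rw [this, Real.exp_zero, one_div]
  have hFσ : Finf β E σ = β⁻¹ * Real.log ZS⁻¹ := by
    rw [Finf, hσimage, csSup_singleton]
  -- the ρ image
  set T := (fun i => ρ i * Real.exp (β * E i)) '' {i | 0 < ρ i} with hT
  have hρset : {i : Fin d | 0 < ρ i} = ↑S := by
    ext i; simp [hsupp i]
  have hTfin : T.Finite := by
    rw [hT, hρset]; exact (S.finite_toSet).image _
  have hmem : ρ i₀ * Real.exp (β * E i₀) ∈ T := ⟨i₀, (hsupp i₀).mpr hi₀S, rfl⟩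
  have hle : ρ i₀ * Real.exp (β * E i₀) ≤ sSup T :=
    le_csSup hTfin.bddAbove hmem
  have hkey : ZS⁻¹ < sSup T := by
    refine lt_of_lt_of_le ?_ hle
    have : ZS⁻¹ = σ i₀ * Real.exp (β * E i₀) := by
      rw [hσval i₀ hi₀S, div_mul_eq_mul_div, ← Real.exp_add]
      have : -β * E i₀ + β * E i₀ = 0 := by ring
      rw [this, Real.exp_zero, one_div]
    rw [this]
    exact mul_lt_mul_of_pos_right hi₀ (Real.exp_pos _)
  rw [hFσ, Finf, ← hT]
  have hlog : Real.log ZS⁻¹ < Real.log (sSup T) :=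
    Real.log_lt_log (inv_pos.mpr hZpos) hkey
  exact mul_lt_mul_of_pos_left hlog (inv_pos.mpr hβ)
end

section
/- Binomial tail lower bound: for 0 < q < p < 1 and k = ⌊qN⌋ with 1 ≤ k ≤ N-1, B(p,k,N) = Σ_{m=0}^{k} C(N,m) p^m (1-p)^{N-m} ≥ (8N·(k/N)(1-k/N))^{-1/2} e^{-N D(k/N ‖ p)}. -/
/-- Lower tail of a Binomial(N, p) distribution: `B(p,k,N) = Σ_{m=0}^k C(N,m) p^m (1-p)^{N-m}`. -/
noncomputable def binTail (p : ℝ) (k N : ℕ) : ℝ :=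
  ∑ m ∈ Finset.range (k + 1), (N.choose m : ℝ) * p ^ m * (1 - p) ^ (N - m)

/-- Binary relative entropy (natural log): `D(q‖p) = q log(q/p) + (1-q) log((1-q)/(1-p))`. -/
noncomputable def relent (q p : ℝ) : ℝ :=
  q * Real.log (q / p) + (1 - q) * Real.log ((1 - q) / (1 - p))

/-!
The tail is at least its last term `C(N,k) p^k (1-p)^(N-k)`. Exponential tilting rewrites this
term as `C(N,k) x^k (1-x)^(N-k) · e^{-N D(x‖p)}` with `x = k/N`, so it remains to bound the mass
of a Binomial(N, x) distribution at its mean `k` from below. Writing the factorials in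
`C(N,k) = N!/(k!(N-k)!)` through the Stirling sequence `s n = n!/(√(2n)(n/e)^n)` turns that mass
times `√(8Nx(1-x))` into `2 s(N)/(s(k) s(N-k))`. Finally `s(a) s(b) ≤ 2 s(a+b)` because `s`
decreases to `√π` and already `s 1 · s 3` and `s 2 · s 2` are below `2√π`; the pairs `(1, 1)` and
`(1, 2)` are checked directly.
-/

open Real Nat

theorem exp_one_pow_eight_le : exp 1 ^ 8 ≤ 972 * π := by
  have h8 := pow_le_pow_left₀ (exp_pos 1).le exp_one_lt_d9.le 8
  generalize exp 1 = e at h8 ⊢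
  linarith [pi_gt_d2]

namespace Stirling

theorem stirlingSeq_nonneg (n : ℕ) : 0 ≤ stirlingSeq n := by
  unfold stirlingSeq; positivity

theorem stirlingSeq_pos {n : ℕ} (hn : n ≠ 0) : 0 < stirlingSeq n :=
  (sqrt_pos.2 pi_pos).trans_le (sqrt_pi_le_stirlingSeq hn)

theorem stirlingSeq_le_of_le {m n : ℕ} (hm : m ≠ 0) (hmn : m ≤ n) :
    stirlingSeq n ≤ stirlingSeq m := by
  obtain ⟨m, rfl⟩ := exists_eq_succ_of_ne_zero hm
  obtain ⟨n, rfl⟩ := exists_eq_succ_of_ne_zero (by omega : n ≠ 0)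
  exact stirlingSeq'_antitone (succ_le_succ_iff.mp hmn)

theorem stirlingSeq_sq_le_of_le {m n : ℕ} (hm : m ≠ 0) (hmn : m ≤ n) :
    stirlingSeq n ^ 2 ≤ stirlingSeq m ^ 2 :=
  pow_le_pow_left₀ (stirlingSeq_nonneg n) (stirlingSeq_le_of_le hm hmn) 2

theorem pi_le_stirlingSeq_sq {n : ℕ} (hn : n ≠ 0) : π ≤ stirlingSeq n ^ 2 := by
  simpa [sq_sqrt pi_pos.le] using pow_le_pow_left₀ (sqrt_nonneg π) (sqrt_pi_le_stirlingSeq hn) 2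

theorem stirlingSeq_sq (n : ℕ) :
    stirlingSeq n ^ 2 = (n ! : ℝ) ^ 2 / (2 * n * (n / exp 1) ^ (2 * n)) := by
  rw [stirlingSeq, div_pow, mul_pow, sq_sqrt (by positivity), ← pow_mul, mul_comm n 2]

theorem stirlingSeq_one_sq : stirlingSeq 1 ^ 2 = exp 1 ^ 2 / 2 := by
  rw [stirlingSeq_one, div_pow, sq_sqrt zero_le_two]

theorem stirlingSeq_two_sq : stirlingSeq 2 ^ 2 = exp 1 ^ 4 / 16 := by
  rw [stirlingSeq_sq, div_pow]; simp only [factorial]; push_cast; field_simp; ring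

theorem stirlingSeq_three_sq : stirlingSeq 3 ^ 2 = 2 * exp 1 ^ 6 / 243 := by
  rw [stirlingSeq_sq, div_pow]; simp only [factorial]; push_cast; field_simp; ring

theorem stirlingSeq_mul_stirlingSeq_le {a b : ℕ} (ha : a ≠ 0) (hb : b ≠ 0) :
    stirlingSeq a * stirlingSeq b ≤ 2 * stirlingSeq (a + b) := by
  wlog hab : a ≤ b generalizing a b
  · rw [mul_comm, add_comm]; exact this hb ha (by omega)
  rw [← pow_le_pow_iff_left₀ (mul_nonneg (stirlingSeq_nonneg a) (stirlingSeq_nonneg b))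
    (mul_nonneg zero_le_two (stirlingSeq_nonneg _)) two_ne_zero, mul_pow, mul_pow]
  have he : 0 < exp 1 := exp_pos 1
  obtain ⟨rfl, rfl⟩ | ⟨rfl, rfl⟩ | hab4 : (a = 1 ∧ b = 1) ∨ (a = 1 ∧ b = 2) ∨ 4 ≤ a + b := by
    omega
  · rw [stirlingSeq_one_sq, stirlingSeq_two_sq]; exact le_of_eq (by ring)
  · rw [stirlingSeq_one_sq, stirlingSeq_two_sq, stirlingSeq_three_sq]
    ring_nf; nlinarith [pow_pos he 6]
  have h_prod : stirlingSeq a ^ 2 * stirlingSeq b ^ 2 ≤ exp 1 ^ 8 / 243 := by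
    obtain rfl | ha1 := eq_or_ne a 1
    · calc stirlingSeq 1 ^ 2 * stirlingSeq b ^ 2
          ≤ stirlingSeq 1 ^ 2 * stirlingSeq 3 ^ 2 :=
            mul_le_mul_of_nonneg_left (stirlingSeq_sq_le_of_le three_ne_zero (by omega))
              (sq_nonneg _)
        _ = exp 1 ^ 8 / 243 := by rw [stirlingSeq_one_sq, stirlingSeq_three_sq]; ring
    · calc stirlingSeq a ^ 2 * stirlingSeq b ^ 2
          ≤ stirlingSeq 2 ^ 2 * stirlingSeq 2 ^ 2 :=
            mul_le_mul (stirlingSeq_sq_le_of_le two_ne_zero (by omega))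
              (stirlingSeq_sq_le_of_le two_ne_zero (by omega)) (sq_nonneg _) (sq_nonneg _)
        _ ≤ exp 1 ^ 8 / 243 := by
            rw [stirlingSeq_two_sq]; ring_nf; nlinarith [pow_pos he 8]
  calc stirlingSeq a ^ 2 * stirlingSeq b ^ 2 ≤ exp 1 ^ 8 / 243 := h_prod
    _ ≤ 4 * π := by linarith [exp_one_pow_eight_le]
    _ ≤ 2 ^ 2 * stirlingSeq (a + b) ^ 2 := by
      linarith [pi_le_stirlingSeq_sq (n := a + b) (by omega)]

end Stirling

open Stirling

theorem choose_mul_pow_mul_sqrt_mul_stirlingSeq {k N : ℕ} (hk : k ≠ 0) (hkN : k < N) :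
    (N.choose k : ℝ) * (k / N) ^ k * (1 - k / N) ^ (N - k) * √(2 * N * (k / N) * (1 - k / N)) *
      (stirlingSeq k * stirlingSeq (N - k)) = stirlingSeq N := by
  obtain ⟨b, rfl⟩ := Nat.exists_eq_add_of_le hkN.le
  have hb : b ≠ 0 := by omega
  have hfact : ((k + b).choose k : ℝ) * k ! * b ! = (k + b)! := by
    rw [← Nat.choose_mul_factorial_mul_factorial hkN.le, Nat.add_sub_cancel_left]; push_cast; ring
  have hx : 1 - k / (k + b : ℝ) = b / (k + b) := by field_simp; ring
  have hsqrt : √(2 * k) * √(2 * b) =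
      √(2 * (k + b)) * √(2 * (k + b) * (k / (k + b)) * (b / (k + b))) := by
    rw [← sqrt_mul (by positivity), ← sqrt_mul (by positivity)]; congr 1; field_simp
  have hpow : ((k : ℝ) / exp 1) ^ k * ((b : ℝ) / exp 1) ^ b =
      ((k + b : ℝ) / exp 1) ^ (k + b) * (k / (k + b)) ^ k * (b / (k + b)) ^ b := by
    simp only [div_pow, pow_add]; field_simp
  simp only [stirlingSeq, Nat.add_sub_cancel_left]
  push_cast at hfact ⊢
  rw [hx, div_mul_div_comm (k ! : ℝ), mul_mul_mul_comm (√(2 * k)), hsqrt, hpow, ← hfact]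
  field_simp

theorem inv_sqrt_le_choose_mul_pow {k N : ℕ} (hk : k ≠ 0) (hkN : k < N) :
    (√(8 * N * (k / N) * (1 - k / N)))⁻¹ ≤
      (N.choose k : ℝ) * (k / N) ^ k * (1 - k / N) ^ (N - k) := by
  set S := √(2 * N * (k / N) * (1 - k / N))
  have hS : √(8 * N * (k / N) * (1 - k / N)) = 2 * S := by
    rw [show (8 * N * (k / N) * (1 - k / N) : ℝ) = 2 ^ 2 * (2 * N * (k / N) * (1 - k / N)) by ring,
      sqrt_mul (by norm_num), sqrt_sq zero_le_two]
  have hS0 : 0 < S := by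
    have hN : (0 : ℝ) < N := by exact_mod_cast (by omega : 0 < N)
    have hx0 : 0 < (k : ℝ) / N := div_pos (by positivity) hN
    have hx1 : 0 < 1 - (k : ℝ) / N := sub_pos.2 ((div_lt_one hN).2 (by exact_mod_cast hkN))
    positivity
  have hprod := mul_pos (stirlingSeq_pos hk) (stirlingSeq_pos (n := N - k) (by omega))
  have h := stirlingSeq_mul_stirlingSeq_le hk (by omega : N - k ≠ 0)
  rw [Nat.add_sub_cancel' hkN.le, ← choose_mul_pow_mul_sqrt_mul_stirlingSeq hk hkN] at h
  rw [hS, inv_le_iff_one_le_mul₀ (by positivity)]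
  refine le_of_mul_le_mul_right ?_ hprod
  linarith

theorem choose_mul_pow_le_binTail {p : ℝ} (hp0 : 0 ≤ p) (hp1 : p ≤ 1) (k N : ℕ) :
    (N.choose k : ℝ) * p ^ k * (1 - p) ^ (N - k) ≤ binTail p k N :=
  Finset.single_le_sum (f := fun m ↦ (N.choose m : ℝ) * p ^ m * (1 - p) ^ (N - m))
    (fun _ _ ↦ by have := sub_nonneg.2 hp1; positivity) (Finset.self_mem_range_succ k)

theorem pow_mul_pow_eq_mul_exp_neg_mul_relent {p x : ℝ} {k N : ℕ} (hp0 : 0 < p) (hp1 : p < 1)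
    (hx0 : 0 < x) (hx1 : x < 1) (hkN : k ≤ N) (hx : N * x = k) :
    p ^ k * (1 - p) ^ (N - k) = x ^ k * (1 - x) ^ (N - k) * exp (-N * relent x p) := by
  have hp1' : 0 < 1 - p := sub_pos.2 hp1
  have hx1' : 0 < 1 - x := sub_pos.2 hx1
  have hexponent : -N * relent x p =
      k * log (p / x) + ((N - k : ℕ) : ℝ) * log ((1 - p) / (1 - x)) := by
    rw [relent, ← inv_div p, ← inv_div (1 - p), log_inv, log_inv, Nat.cast_sub hkN, ← hx]
    ring
  rw [hexponent, exp_add, exp_nat_mul, exp_nat_mul, exp_log (by positivity),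
    exp_log (by positivity), mul_mul_mul_comm, ← mul_pow, ← mul_pow,
    mul_div_cancel₀ _ hx0.ne', mul_div_cancel₀ _ hx1'.ne']

theorem binTail_lower_bound_general (p q : ℝ) (k N : ℕ)
    (hq : 0 < q) (hqp : q < p) (hp : p < 1)
    (hk1 : 1 ≤ k) (hkN : k ≤ N - 1) :
    binTail p k N ≥
      (Real.sqrt (8 * (N : ℝ) * ((k : ℝ) / N) * (1 - (k : ℝ) / N)))⁻¹ *
        Real.exp (-(N : ℝ) * relent ((k : ℝ) / N) p) := by
  have hp0 : 0 < p := hq.trans hqp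
  have hk0 : k ≠ 0 := by omega
  have hkN' : k < N := by omega
  have hN : (0 : ℝ) < N := by exact_mod_cast (by omega : 0 < N)
  have hx1 : (k : ℝ) / N < 1 := (div_lt_one hN).2 (by exact_mod_cast hkN')
  calc (√(8 * N * (k / N) * (1 - k / N)))⁻¹ * exp (-N * relent (k / N) p)
      ≤ (N.choose k : ℝ) * (k / N) ^ k * (1 - k / N) ^ (N - k) * exp (-N * relent (k / N) p) :=
        mul_le_mul_of_nonneg_right (inv_sqrt_le_choose_mul_pow hk0 hkN') (exp_pos _).le
    _ = N.choose k * p ^ k * (1 - p) ^ (N - k) := by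
        rw [mul_assoc _ (p ^ k), pow_mul_pow_eq_mul_exp_neg_mul_relent hp0 hp
          (div_pos (by positivity) hN) hx1 hkN'.le (mul_div_cancel₀ _ hN.ne')]
        ring
    _ ≤ binTail p k N := choose_mul_pow_le_binTail hp0.le hp.le k N

/-- Binomial tail lower bound: for `0 < q < p < 1` and `k = ⌊qN⌋` with `1 ≤ k ≤ N - 1`,
`B(p,k,N) ≥ (8N (k/N)(1 - k/N))^{-1/2} e^{-N D(k/N ‖ p)}`. -/
theorem binTail_lower_bound (p q : ℝ) (k N : ℕ)
    (hq : 0 < q) (hqp : q < p) (hp : p < 1)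
    (hk : k = Nat.floor (q * N)) (hk1 : 1 ≤ k) (hkN : k ≤ N - 1) :
    binTail p k N ≥
      (Real.sqrt (8 * (N : ℝ) * ((k : ℝ) / N) * (1 - (k : ℝ) / N)))⁻¹ *
        Real.exp (-(N : ℝ) * relent ((k : ℝ) / N) p) :=
  binTail_lower_bound_general p q k N hq hqp hp hk1 hkN
end

section
/- If k_N/N → q with 0 < q < p < 1, then -(1/N) log B(p, k_N, N) → D(q‖p) as N → ∞, where B(p,k,N) = Σ_{m=0}^{k} C(N,m) p^m (1-p)^{N-m}. -/
/-!
The `k`-th terms `b_k(p) = C(N,k) p^k (1-p)^(N-k)` for `p` and for `k/N` differ exactly by the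
factor `exp (-N D(k/N‖p))`. Since `k` is the mode of Binomial(N, k/N), `b_k(k/N)` lies between
`1/(N+1)` and `1`. Since eventually `k ≤ (N+1)p`, the terms `b_m(p)`, `m ≤ k`, increase, so
`B(p,k,N)` lies between `b_k(p)` and `(N+1) b_k(p)`. Hence `-(1/N) log B(p,k,N)` is within
`log(N+1)/N` of `D(k/N‖p)`, and `D(·‖p)` is continuous at `q`.
-/

open Filter Topology

open Finset

noncomputable def binomTerm (p : ℝ) (N m : ℕ) : ℝ :=
  N.choose m * p ^ m * (1 - p) ^ (N - m)

lemma binTail_eq_sum_binomTerm (p : ℝ) (k N : ℕ) :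
    binTail p k N = ∑ m ∈ range (k + 1), binomTerm p N m := rfl

section binomTerm

variable {p : ℝ} {N k m : ℕ}

lemma binomTerm_nonneg (hp0 : 0 ≤ p) (hp1 : p ≤ 1) : 0 ≤ binomTerm p N m := by
  have : 0 ≤ 1 - p := by linarith
  unfold binomTerm
  positivity

lemma binomTerm_pos (hp0 : 0 < p) (hp1 : p < 1) (hk : k ≤ N) : 0 < binomTerm p N k := by
  have : 0 < 1 - p := by linarith
  have : 0 < (N.choose k : ℝ) := by exact_mod_cast Nat.choose_pos hk
  unfold binomTerm
  positivity

lemma binTail_self (p : ℝ) (N : ℕ) : binTail p N N = 1 := by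
  have h := (add_pow p (1 - p) N).symm
  rw [add_sub_cancel, one_pow] at h
  rw [← h, binTail]
  exact sum_congr rfl fun m _ => by ring

lemma binomTerm_le_one (hp0 : 0 ≤ p) (hp1 : p ≤ 1) : binomTerm p N m ≤ 1 := by
  rcases le_or_gt m N with h | h
  · rw [← binTail_self p N, binTail_eq_sum_binomTerm]
    exact single_le_sum (f := binomTerm p N) (fun _ _ => binomTerm_nonneg hp0 hp1)
      (mem_range_succ_iff.mpr h)
  · simp [binomTerm, Nat.choose_eq_zero_of_lt h]

lemma binomTerm_succ_mul (p : ℝ) (h : m < N) :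
    binomTerm p N (m + 1) * ((m + 1) * (1 - p)) = binomTerm p N m * ((N - m) * p) := by
  have hchoose : (N.choose (m + 1) : ℝ) * (m + 1) = N.choose m * ((N : ℝ) - m) := by
    have := congrArg (Nat.cast (R := ℝ)) (Nat.choose_succ_right_eq N m)
    push_cast [Nat.cast_sub h.le] at this
    exact this
  have hpow : (1 - p) ^ (N - (m + 1)) * (1 - p) = (1 - p) ^ (N - m) := by
    rw [← pow_succ]; congr 1; omega
  calc binomTerm p N (m + 1) * ((m + 1) * (1 - p))
      = (N.choose (m + 1) * (m + 1)) * (p ^ m * p) * ((1 - p) ^ (N - (m + 1)) * (1 - p)) := by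
        unfold binomTerm; ring
    _ = binomTerm p N m * ((N - m) * p) := by
        rw [hchoose, hpow]; unfold binomTerm; ring

/-- The ratio of consecutive terms is `(N-m)p / ((m+1)(1-p))`, which is `≥ 1` exactly when
`m + 1 ≤ (N+1)p`. -/
lemma binomTerm_le_succ (hp0 : 0 ≤ p) (hp1 : p < 1) (h : (m : ℝ) + 1 ≤ (N + 1) * p) :
    binomTerm p N m ≤ binomTerm p N (m + 1) := by
  have hmN : m < N := by
    have : (m : ℝ) < N := by nlinarith
    exact_mod_cast this
  have hpos : 0 < ((m : ℝ) + 1) * (1 - p) := by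
    have : 0 < 1 - p := by linarith
    positivity
  refine le_of_mul_le_mul_right ?_ hpos
  rw [binomTerm_succ_mul p hmN]
  exact mul_le_mul_of_nonneg_left (by linear_combination h) (binomTerm_nonneg hp0 hp1.le)

lemma binomTerm_succ_le (hp0 : 0 ≤ p) (hp1 : p < 1) (h : (N + 1) * p ≤ (m : ℝ) + 1) :
    binomTerm p N (m + 1) ≤ binomTerm p N m := by
  rcases lt_or_ge m N with hmN | hNm
  · have hpos : 0 < ((m : ℝ) + 1) * (1 - p) := by
      have : 0 < 1 - p := by linarith
      positivity
    refine le_of_mul_le_mul_right ?_ hpos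
    rw [binomTerm_succ_mul p hmN]
    exact mul_le_mul_of_nonneg_left (by linear_combination h) (binomTerm_nonneg hp0 hp1.le)
  · simpa [binomTerm, Nat.choose_eq_zero_of_lt (Nat.lt_succ_of_le hNm)] using
      binomTerm_nonneg hp0 hp1.le

lemma binomTerm_le_of_le (hp0 : 0 ≤ p) (hp1 : p < 1) (hmk : m ≤ k)
    (hk : (k : ℝ) ≤ (N + 1) * p) : binomTerm p N m ≤ binomTerm p N k := by
  induction k, hmk using Nat.le_induction with
  | base => rfl
  | succ k _ ih =>
    push_cast at hk
    exact (ih (by linarith)).trans (binomTerm_le_succ hp0 hp1 hk)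

lemma binomTerm_le_of_ge (hp0 : 0 ≤ p) (hp1 : p < 1) (hkm : k ≤ m)
    (hk : (N + 1) * p ≤ (k : ℝ) + 1) : binomTerm p N m ≤ binomTerm p N k :=
  antitoneOn_nat_Ici_of_succ_le (f := binomTerm p N)
    (fun n hn => binomTerm_succ_le hp0 hp1 (by
      have : (k : ℝ) ≤ n := by exact_mod_cast hn
      linarith)) (le_refl k) hkm hkm

lemma binomTerm_div_le (hkN : k < N) (m : ℕ) :
    binomTerm ((k : ℝ) / N) N m ≤ binomTerm ((k : ℝ) / N) N k := by
  have hN : (0 : ℝ) < N := by exact_mod_cast (Nat.zero_le k).trans_lt hkN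
  have hkN' : (k : ℝ) < N := by exact_mod_cast hkN
  have hp0 : 0 ≤ (k : ℝ) / N := by positivity
  have hp1 : (k : ℝ) / N < 1 := (div_lt_one hN).mpr hkN'
  have hmode : ((N : ℝ) + 1) * (k / N) = k + k / N := by field_simp
  rcases le_total m k with h | h
  · exact binomTerm_le_of_le hp0 hp1 h (by rw [hmode]; linarith)
  · exact binomTerm_le_of_ge hp0 hp1 h (by rw [hmode]; linarith)

lemma inv_succ_le_binomTerm_div (hkN : k < N) :
    ((N : ℝ) + 1)⁻¹ ≤ binomTerm ((k : ℝ) / N) N k := by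
  have hsum : (1 : ℝ) ≤ (N + 1) * binomTerm ((k : ℝ) / N) N k := by
    calc (1 : ℝ) = ∑ m ∈ range (N + 1), binomTerm ((k : ℝ) / N) N m := by
          rw [← binTail_self _ N, binTail_eq_sum_binomTerm]
      _ ≤ ∑ _m ∈ range (N + 1), binomTerm ((k : ℝ) / N) N k :=
          sum_le_sum fun m _ => binomTerm_div_le hkN m
      _ = (N + 1) * binomTerm ((k : ℝ) / N) N k := by simp
  rwa [inv_le_iff_one_le_mul₀ (by positivity), mul_comm]

lemma log_binomTerm (hp0 : 0 < p) (hp1 : p < 1) (hk : k ≤ N) :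
    Real.log (binomTerm p N k) =
      Real.log (N.choose k) + k * Real.log p + (N - k) * Real.log (1 - p) := by
  have hc : (N.choose k : ℝ) ≠ 0 := by exact_mod_cast (Nat.choose_pos hk).ne'
  have hp : p ^ k ≠ 0 := pow_ne_zero _ hp0.ne'
  have hq : (1 - p) ^ (N - k) ≠ 0 := pow_ne_zero _ (by linarith)
  rw [binomTerm, Real.log_mul (mul_ne_zero hc hp) hq, Real.log_mul hc hp, Real.log_pow,
    Real.log_pow, Nat.cast_sub hk]

lemma log_binomTerm_eq_sub_relent {q : ℝ} (hp0 : 0 < p) (hp1 : p < 1) (hq0 : 0 < q) (hq1 : q < 1)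
    (hk : k ≤ N) (hNq : (N : ℝ) * q = k) :
    Real.log (binomTerm p N k) = Real.log (binomTerm q N k) - N * relent q p := by
  rw [log_binomTerm hp0 hp1 hk, log_binomTerm hq0 hq1 hk, relent,
    Real.log_div hq0.ne' hp0.ne', Real.log_div (by linarith) (by linarith)]
  linear_combination (Real.log q - Real.log p - Real.log (1 - q) + Real.log (1 - p)) * hNq

lemma binomTerm_le_binTail (hp0 : 0 ≤ p) (hp1 : p ≤ 1) :
    binomTerm p N k ≤ binTail p k N :=
  single_le_sum (f := binomTerm p N) (fun _ _ => binomTerm_nonneg hp0 hp1) (self_mem_range_succ k)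

lemma binTail_le_mul_binomTerm (hp0 : 0 ≤ p) (hp1 : p < 1) (hk : (k : ℝ) ≤ (N + 1) * p) :
    binTail p k N ≤ (k + 1) * binomTerm p N k := by
  calc binTail p k N ≤ ∑ _m ∈ range (k + 1), binomTerm p N k :=
        sum_le_sum fun m hm => binomTerm_le_of_le hp0 hp1 (mem_range_succ_iff.mp hm) hk
    _ = (k + 1) * binomTerm p N k := by simp

lemma abs_log_binTail_add_relent_le (hp0 : 0 < p) (hp1 : p < 1) (hk0 : 0 < k)
    (hkN : k < N) (hk : (k : ℝ) ≤ (N + 1) * p) :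
    |Real.log (binTail p k N) + N * relent ((k : ℝ) / N) p| ≤ Real.log (N + 1) := by
  have hN : (0 : ℝ) < N := by exact_mod_cast hk0.trans hkN
  have hk_succ : (k : ℝ) + 1 ≤ N + 1 := by exact_mod_cast Nat.succ_le_succ hkN.le
  have hT := binomTerm_pos (N := N) hp0 hp1 hkN.le
  have hmode := inv_succ_le_binomTerm_div hkN
  have hmode_pos : 0 < binomTerm ((k : ℝ) / N) N k := lt_of_lt_of_le (by positivity) hmode
  have hlog_mode_nonpos : Real.log (binomTerm ((k : ℝ) / N) N k) ≤ 0 :=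
    Real.log_nonpos hmode_pos.le (binomTerm_le_one (by positivity) (div_le_one_of_le₀
      (by exact_mod_cast hkN.le) (Nat.cast_nonneg N)))
  have hlog_mode_ge : -Real.log (N + 1) ≤ Real.log (binomTerm ((k : ℝ) / N) N k) := by
    rw [← Real.log_inv]; exact Real.log_le_log (by positivity) hmode
  have hlower : Real.log (binomTerm p N k) ≤ Real.log (binTail p k N) :=
    Real.log_le_log hT (binomTerm_le_binTail hp0.le hp1.le)
  have hupper : Real.log (binTail p k N) ≤ Real.log (N + 1) + Real.log (binomTerm p N k) := by
    calc Real.log (binTail p k N) ≤ Real.log ((N + 1) * binomTerm p N k) :=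
          Real.log_le_log (hT.trans_le (binomTerm_le_binTail hp0.le hp1.le))
            ((binTail_le_mul_binomTerm hp0.le hp1 hk).trans (by gcongr))
      _ = Real.log (N + 1) + Real.log (binomTerm p N k) := Real.log_mul (by positivity) hT.ne'
  rw [log_binomTerm_eq_sub_relent (q := (k : ℝ) / N) hp0 hp1 (by positivity)
    ((div_lt_one hN).mpr (by exact_mod_cast hkN)) hkN.le (by field_simp)] at hlower hupper
  rw [abs_le]
  constructor <;> linarith

lemma abs_neg_log_binTail_div_sub_relent_le (hp0 : 0 < p) (hp1 : p < 1)
    (hk0 : 0 < k) (hkN : k < N) (hk : (k : ℝ) ≤ (N + 1) * p) :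
    |-(1 / (N : ℝ)) * Real.log (binTail p k N) - relent ((k : ℝ) / N) p| ≤
      Real.log (N + 1) / N := by
  have hN : (0 : ℝ) < N := by exact_mod_cast hk0.trans hkN
  have hscale : -(1 / (N : ℝ)) * Real.log (binTail p k N) - relent ((k : ℝ) / N) p =
      -(Real.log (binTail p k N) + N * relent ((k : ℝ) / N) p) / N := by
    field_simp
    ring
  rw [hscale, abs_div, abs_neg, abs_of_pos hN]
  gcongr
  exact abs_log_binTail_add_relent_le hp0 hp1 hk0 hkN hk

end binomTerm

lemma tendsto_log_natCast_add_one_div :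
    Tendsto (fun N : ℕ => Real.log (N + 1) / N) atTop (𝓝 0) := by
  have h := (Real.tendsto_pow_log_div_mul_add_atTop 1 (-1) 1 one_ne_zero).comp
    (tendsto_atTop_add_const_right _ 1 tendsto_natCast_atTop_atTop)
  simpa [Function.comp_def] using h

lemma continuousAt_relent {p q : ℝ} (hq0 : q ≠ 0) (hq1 : q ≠ 1) (hp0 : p ≠ 0)
    (hp1 : p ≠ 1) : ContinuousAt (fun x => relent x p) q := by
  have hpq : q / p ≠ 0 := div_ne_zero hq0 hp0
  have hpq' : (1 - q) / (1 - p) ≠ 0 :=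
    div_ne_zero (sub_ne_zero.2 hq1.symm) (sub_ne_zero.2 hp1.symm)
  unfold relent
  fun_prop (disch := assumption)

theorem binTail_log_asymptotics_general (p q : ℝ) (k : ℕ → ℕ)
    (hq : 0 < q) (hqp : q < p) (hp : p < 1)
    (hlim : Tendsto (fun N : ℕ => (k N : ℝ) / N) atTop (nhds q)) :
    Tendsto (fun N : ℕ => -(1 / (N : ℝ)) * Real.log (binTail p (k N) N)) atTop
      (nhds (relent q p)) := by
  have hp0 : 0 < p := hq.trans hqp
  have hrel : Tendsto (fun N : ℕ => relent ((k N : ℝ) / N) p) atTop (𝓝 (relent q p)) :=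
    (continuousAt_relent hq.ne' (hqp.trans hp).ne hp0.ne' hp.ne).tendsto.comp hlim
  have herr : ∀ᶠ N : ℕ in atTop,
      ‖-(1 / (N : ℝ)) * Real.log (binTail p (k N) N) - relent ((k N : ℝ) / N) p‖ ≤
        Real.log (N + 1) / N := by
    filter_upwards [hlim.eventually (lt_mem_nhds (half_lt_self hq)),
      hlim.eventually (gt_mem_nhds (by linarith : q < (q + p) / 2)),
      eventually_gt_atTop 0] with N hlo hhi hN
    have hN' : (0 : ℝ) < N := by exact_mod_cast hN
    rw [lt_div_iff₀ hN'] at hlo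
    rw [div_lt_iff₀ hN'] at hhi
    have hk0 : 0 < k N := by
      by_contra! h
      rw [Nat.le_zero.mp h, Nat.cast_zero] at hlo
      nlinarith
    have hkN : k N < N := by
      have : (k N : ℝ) < N := by nlinarith
      exact_mod_cast this
    exact abs_neg_log_binTail_div_sub_relent_le hp0 hp hk0 hkN (by nlinarith)
  simpa using (squeeze_zero_norm' herr tendsto_log_natCast_add_one_div).add hrel

/-- Asymptotics of the binomial lower tail: if `k_N/N → q` with `0 < q < p < 1`, then
`-(1/N) log B(p, k_N, N) → D(q‖p)` as `N → ∞`. -/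
theorem binTail_log_asymptotics (p q : ℝ) (k : ℕ → ℕ)
    (hq : 0 < q) (hqp : q < p) (hp : p < 1)
    (hkN : ∀ N, k N ≤ N)
    (hlim : Tendsto (fun N : ℕ => (k N : ℝ) / N) atTop (nhds q)) :
    Tendsto (fun N : ℕ => -(1 / (N : ℝ)) * Real.log (binTail p (k N) N)) atTop
      (nhds (relent q p)) :=
  binTail_log_asymptotics_general p q k hq hqp hp hlim
end

section
/- If k_N/N → q with 0 < q < p_β < 1, then -(1/N) log Z_{k_N}(β) → -log Z(β) + D(q‖p_β) as N → ∞, where Z_k(β) = Σ_{m=0}^{k} C(N,m) e^{-mβω}, Z(β) = 1 + e^{-βω}, p_β = e^{-βω}/(1+e^{-βω}). -/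
open Filter Topology

/-- Truncated partition function of `N` qubits of gap `ω` at inverse temperature `β`:
`Z_k(β) = Σ_{m=0}^k C(N,m) e^{-mβω}`. -/
noncomputable def Ztrunc (N k : ℕ) (β ω : ℝ) : ℝ :=
  ∑ m ∈ Finset.range (k + 1), (N.choose m : ℝ) * Real.exp (-(m : ℝ) * β * ω)

/-!
With `x = e^{-βω}` the truncated sum is `Z_k = Σ_{m ≤ k} C(N,m) x^m`. While `k/N < p_β = x/(1+x)`
its terms increase with `m`, so `Z_k` lies between its last term `C(N,k) x^k` and `k + 1` times
that term. The same unimodality, applied to `(1 + y)^N` with `y = k/(N-k)`, pins `C(N,k)` to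
`e^{N H(k/N)}` within a factor `N + 1`. Hence
`-(1/N) log Z_{k_N} = -H(k_N/N) - (k_N/N) log x + O(log N / N)`, and
`-H(q) - q log x = -log(1 + x) + D(q‖p_β)`.
-/

open Finset Real

section BinomialTerms

variable {N k m : ℕ} {y : ℝ}

lemma succ_mul_choose_succ_mul_pow (hm : m < N) :
    ((m : ℝ) + 1) * (N.choose (m + 1) * y ^ (m + 1)) =
      ((N : ℝ) - m) * y * (N.choose m * y ^ m) := by
  have h : ((N.choose (m + 1) * (m + 1) : ℕ) : ℝ) = (N.choose m * (N - m) : ℕ) := by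
    rw [Nat.choose_succ_right_eq]
  push_cast [Nat.cast_sub hm.le] at h
  linear_combination y ^ (m + 1) * h

lemma choose_mul_pow_le_succ (hy : 0 ≤ y) (h : (m : ℝ) + 1 ≤ y * (N - m)) :
    (N.choose m : ℝ) * y ^ m ≤ N.choose (m + 1) * y ^ (m + 1) := by
  have hm : m < N := by
    by_contra! hNm
    have : y * ((N : ℝ) - m) ≤ 0 :=
      mul_nonpos_of_nonneg_of_nonpos hy (by simp [hNm])
    linarith
  refine le_of_mul_le_mul_left ?_ (by positivity : (0 : ℝ) < m + 1)
  rw [succ_mul_choose_succ_mul_pow hm]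
  nlinarith [(by positivity : (0 : ℝ) ≤ N.choose m * y ^ m)]

lemma choose_succ_mul_pow_le (hy : 0 ≤ y) (h : y * (N - m) ≤ (m : ℝ) + 1) :
    (N.choose (m + 1) : ℝ) * y ^ (m + 1) ≤ N.choose m * y ^ m := by
  rcases lt_or_ge m N with hm | hm
  · refine le_of_mul_le_mul_left ?_ (by positivity : (0 : ℝ) < m + 1)
    rw [succ_mul_choose_succ_mul_pow hm]
    nlinarith [(by positivity : (0 : ℝ) ≤ N.choose m * y ^ m)]
  · rw [Nat.choose_eq_zero_of_lt (by omega)]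
    simp only [Nat.cast_zero, zero_mul]
    positivity

lemma choose_mul_pow_le_of_le (hy : 0 ≤ y) (hk : (k : ℝ) ≤ y * (N - k)) (hmk : m ≤ k) :
    (N.choose m : ℝ) * y ^ m ≤ N.choose k * y ^ k := by
  induction hmk using Nat.decreasingInduction with
  | self => exact le_rfl
  | of_succ j hj ih =>
    refine (choose_mul_pow_le_succ hy ?_).trans ih
    have : (j : ℝ) + 1 ≤ k := by exact_mod_cast hj
    have : (j : ℝ) ≤ k := by linarith
    nlinarith

lemma choose_mul_pow_le_of_ge (hy : 0 ≤ y) (hk : y * (N - k) ≤ (k : ℝ) + 1) (hkm : k ≤ m) :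
    (N.choose m : ℝ) * y ^ m ≤ N.choose k * y ^ k := by
  induction m, hkm using Nat.le_induction with
  | base => exact le_rfl
  | succ j hj ih =>
    refine (choose_succ_mul_pow_le hy ?_).trans ih
    have : (k : ℝ) ≤ j := by exact_mod_cast hj
    nlinarith

lemma sum_range_choose_mul_pow_le (hy : 0 ≤ y) (hk : (k : ℝ) ≤ y * (N - k)) :
    ∑ m ∈ range (k + 1), (N.choose m : ℝ) * y ^ m ≤ (k + 1) * (N.choose k * y ^ k) := by
  simpa using sum_le_card_nsmul (range (k + 1)) _ _
    fun m hm ↦ choose_mul_pow_le_of_le hy hk (Nat.lt_succ_iff.mp (mem_range.mp hm))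

lemma one_add_pow_le_succ_mul_choose_mul_pow (hy : 0 ≤ y) (hk : (k : ℝ) ≤ y * (N - k))
    (hk' : y * (N - k) ≤ (k : ℝ) + 1) :
    (1 + y) ^ N ≤ (N + 1) * (N.choose k * y ^ k) := by
  rw [add_comm, add_pow]
  simpa [mul_comm] using sum_le_card_nsmul (range (N + 1)) _ _ fun m _ ↦
    (le_total m k).elim (choose_mul_pow_le_of_le hy hk) (choose_mul_pow_le_of_ge hy hk')

lemma choose_mul_pow_le_one_add_pow (hy : 0 ≤ y) (hkN : k ≤ N) :
    (N.choose k : ℝ) * y ^ k ≤ (1 + y) ^ N := by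
  rw [add_comm, add_pow]
  simpa [mul_comm] using single_le_sum (f := fun m ↦ y ^ m * 1 ^ (N - m) * (N.choose m : ℝ))
    (fun m _ ↦ by positivity) (mem_range.mpr (Nat.lt_succ_of_le hkN))

end BinomialTerms

lemma binEntropy_eq_neg_log_one_sub_sub {t : ℝ} (ht0 : 0 < t) (ht1 : t < 1) :
    binEntropy t = -log (1 - t) - t * log (t / (1 - t)) := by
  rw [binEntropy, log_inv, log_inv, log_div ht0.ne' (by linarith)]
  ring

theorem abs_log_choose_sub_mul_binEntropy_le {N k : ℕ} (hk0 : 0 < k) (hkN : k < N) :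
    |log (N.choose k) - N * binEntropy (k / N)| ≤ log (N + 1) := by
  have hN : (0 : ℝ) < N := by exact_mod_cast hk0.trans hkN
  have hkN' : (k : ℝ) < N := by exact_mod_cast hkN
  set t : ℝ := k / N with ht
  have ht0 : 0 < t := by positivity
  have ht1 : t < 1 := (div_lt_one hN).mpr hkN'
  have hNk : (N : ℝ) - k ≠ 0 := by linarith
  have h1t : 1 - t ≠ 0 := by linarith
  have hNt : N * t = k := by
    rw [ht]
    field_simp
  -- for this `y` the `k`-th term of `(1 + y)^N` is the largest one
  set y : ℝ := t / (1 - t) with hy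
  have hy0 : 0 < y := div_pos ht0 (by linarith)
  have hyk : y * (N - k) = k := by
    rw [hy, ht]
    field_simp
  have hC : (0 : ℝ) < N.choose k := by exact_mod_cast Nat.choose_pos hkN.le
  have hlog_term : log (N.choose k * y ^ k) = log (N.choose k) + k * log y := by
    rw [log_mul hC.ne' (by positivity), log_pow]
  have hlog_pow : log ((1 + y) ^ N) = -N * log (1 - t) := by
    rw [log_pow, show 1 + y = (1 - t)⁻¹ by rw [hy]; field_simp; ring, log_inv]
    ring
  have hentropy : N * binEntropy t = log ((1 + y) ^ N) - k * log y := by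
    rw [binEntropy_eq_neg_log_one_sub_sub ht0 ht1, hlog_pow]
    linear_combination (-log y) * hNt
  have hlower := log_le_log (by positivity) (choose_mul_pow_le_one_add_pow hy0.le hkN.le)
  have hupper := log_le_log (by positivity)
    (one_add_pow_le_succ_mul_choose_mul_pow (N := N) hy0.le hyk.ge (by linarith))
  rw [log_mul (by positivity) (by positivity)] at hupper
  rw [hentropy, abs_le]
  constructor <;> linarith

theorem abs_log_sum_range_choose_mul_pow_sub_le {N k : ℕ} {x : ℝ} (hx : 0 < x) (hk0 : 0 < k)
    (hkN : k < N) (hkx : (k : ℝ) ≤ x * (N - k)) :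
    |log (∑ m ∈ range (k + 1), (N.choose m : ℝ) * x ^ m) - (N * binEntropy (k / N) + k * log x)|
      ≤ 2 * log (N + 1) := by
  have hC : (0 : ℝ) < N.choose k := by exact_mod_cast Nat.choose_pos hkN.le
  have hterm : 0 < (N.choose k : ℝ) * x ^ k := by positivity
  have hlog_term : log (N.choose k * x ^ k) = log (N.choose k) + k * log x := by
    rw [log_mul hC.ne' (by positivity), log_pow]
  have hsum : (N.choose k : ℝ) * x ^ k ≤ ∑ m ∈ range (k + 1), (N.choose m : ℝ) * x ^ m :=
    single_le_sum (f := fun m ↦ (N.choose m : ℝ) * x ^ m) (fun m _ ↦ by positivity)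
      (mem_range.mpr k.lt_succ_self)
  have hlower := log_le_log hterm hsum
  have hupper := log_le_log (hterm.trans_le hsum) (sum_range_choose_mul_pow_le hx.le hkx)
  rw [log_mul (by positivity) hterm.ne'] at hupper
  have hk : log (k + 1) ≤ log (N + 1) := by
    have : (k : ℝ) < N := by exact_mod_cast hkN
    exact log_le_log (by positivity) (by linarith)
  have hN := abs_le.mp (abs_log_choose_sub_mul_binEntropy_le hk0 hkN)
  rw [abs_le]
  constructor <;> linarith [hN.1, hN.2]

lemma relent_div_one_add {q x : ℝ} (hq0 : 0 < q) (hq1 : q < 1) (hx : 0 < x) :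
    relent q (x / (1 + x)) = log (1 + x) - binEntropy q - q * log x := by
  have h1x : 1 - x / (1 + x) = (1 + x)⁻¹ := by field_simp; ring
  rw [relent, h1x, div_inv_eq_mul, log_div hq0.ne' (by positivity), log_div hx.ne' (by positivity),
    log_mul (by linarith) (by positivity), binEntropy, log_inv, log_inv]
  ring

lemma Ztrunc_eq_sum_choose_mul_pow (N k : ℕ) (β ω : ℝ) :
    Ztrunc N k β ω = ∑ m ∈ range (k + 1), (N.choose m : ℝ) * exp (-β * ω) ^ m := by
  refine sum_congr rfl fun m _ ↦ ?_
  rw [← exp_nat_mul]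
  ring_nf

lemma tendsto_log_natCast_add_one_div_atTop :
    Tendsto (fun N : ℕ ↦ log (N + 1) / N) atTop (𝓝 0) := by
  have h := (tendsto_pow_log_div_mul_add_atTop 1 (-1) 1 one_ne_zero).comp
    (tendsto_atTop_add_const_right _ 1 tendsto_natCast_atTop_atTop)
  refine h.congr fun N ↦ ?_
  simp

theorem Ztrunc_log_asymptotics_general (β ω q : ℝ)
    (k : ℕ → ℕ)
    (hq : 0 < q) (hqp : q < Real.exp (-β * ω) / (1 + Real.exp (-β * ω)))
    (hlim : Tendsto (fun N : ℕ => (k N : ℝ) / N) atTop (nhds q)) :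
    Tendsto (fun N : ℕ => -(1 / (N : ℝ)) * Real.log (Ztrunc N (k N) β ω)) atTop
      (nhds (-Real.log (1 + Real.exp (-β * ω)) +
        relent q (Real.exp (-β * ω) / (1 + Real.exp (-β * ω))))) := by
  set x := exp (-β * ω)
  have hx : 0 < x := exp_pos _
  have hp1 : x / (1 + x) < 1 := (div_lt_one (by positivity)).mpr (by linarith)
  have hlimit : Tendsto (fun N : ℕ ↦ -binEntropy (k N / N) - k N / N * log x) atTop
      (𝓝 (-binEntropy q - q * log x)) :=
    ((binEntropy_continuous.tendsto q).comp hlim).neg.sub (hlim.mul_const _)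
  have herror : ∀ᶠ N : ℕ in atTop,
      dist (-binEntropy (k N / N) - k N / N * log x) (-(1 / (N : ℝ)) * log (Ztrunc N (k N) β ω))
        ≤ 2 * (log (N + 1) / N) := by
    filter_upwards [hlim.eventually_const_lt hq, hlim.eventually_lt_const hqp] with N hk0 hkp
    obtain ⟨hk, hN⟩ : 0 < (k N : ℝ) ∧ 0 < (N : ℝ) :=
      (div_pos_iff.mp hk0).resolve_right fun h ↦ (Nat.cast_nonneg _).not_gt h.1
    have hkx : (k N : ℝ) * (1 + x) < x * N := (div_lt_div_iff₀ hN (by positivity)).mp hkp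
    have hkN : (k N : ℝ) < N := by nlinarith
    have hbound := abs_log_sum_range_choose_mul_pow_sub_le hx (k := k N) (N := N)
      (by exact_mod_cast hk) (by exact_mod_cast hkN) (by linarith)
    have hZ : Ztrunc N (k N) β ω = ∑ m ∈ range (k N + 1), (N.choose m : ℝ) * x ^ m :=
      Ztrunc_eq_sum_choose_mul_pow N (k N) β ω
    rw [dist_comm, dist_eq_norm, Real.norm_eq_abs, hZ]
    calc _ = |log (∑ m ∈ range (k N + 1), (N.choose m : ℝ) * x ^ m)
              - (N * binEntropy (k N / N) + k N * log x)| / N := by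
          rw [← abs_of_pos hN, ← abs_div, abs_of_pos hN, ← abs_neg]
          congr 1
          field_simp
          ring
      _ ≤ 2 * (log (N + 1) / N) := by
          rw [← mul_div_assoc]
          gcongr
  have h := hlimit.congr_dist <| squeeze_zero' (.of_forall fun _ ↦ dist_nonneg) herror
    (by simpa using tendsto_log_natCast_add_one_div_atTop.const_mul 2)
  rw [relent_div_one_add hq (hqp.trans hp1) hx]
  convert h using 2
  ring

/-- If `k_N/N → q` with `0 < q < p_β < 1`, then
`-(1/N) log Z_{k_N}(β) → -log Z(β) + D(q‖p_β)` as `N → ∞`, where `Z(β) = 1 + e^{-βω}`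
and `p_β = e^{-βω}/(1 + e^{-βω})`. -/
theorem Ztrunc_log_asymptotics (β ω q : ℝ) (hβ : 0 < β) (hω : 0 < ω)
    (k : ℕ → ℕ) (hkN : ∀ N, k N ≤ N)
    (hq : 0 < q) (hqp : q < Real.exp (-β * ω) / (1 + Real.exp (-β * ω)))
    (hlim : Tendsto (fun N : ℕ => (k N : ℝ) / N) atTop (nhds q)) :
    Tendsto (fun N : ℕ => -(1 / (N : ℝ)) * Real.log (Ztrunc N (k N) β ω)) atTop
      (nhds (-Real.log (1 + Real.exp (-β * ω)) +
        relent q (Real.exp (-β * ω) / (1 + Real.exp (-β * ω))))) :=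
  Ztrunc_log_asymptotics_general β ω q k hq hqp hlim
end

section
/- The local excited-state probability of the reversible N-qubit state on support {0,...,k}, given by p_k = (Σ_{m=0}^{k} m C(N,m) e^{-mβω}) / (N Σ_{m=0}^{k} C(N,m) e^{-mβω}), converges to q as N → ∞ whenever k_N/N → q with 0 < q < p_β. -/
open Filter Topology

/-- Per-qubit excited-state probability of the reversible `N`-qubit state on the support
of energies `E_m = mω`, `m ≤ k`:
`p_k = (Σ_{m=0}^k m C(N,m) e^{-mβω}) / (N Σ_{m=0}^k C(N,m) e^{-mβω})`. -/
noncomputable def pLocal (N k : ℕ) (β ω : ℝ) : ℝ :=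
  (∑ m ∈ Finset.range (k + 1), (m : ℝ) * (N.choose m : ℝ) * Real.exp (-(m : ℝ) * β * ω)) /
    ((N : ℝ) * ∑ m ∈ Finset.range (k + 1), (N.choose m : ℝ) * Real.exp (-(m : ℝ) * β * ω))

open Finset in
lemma gap_sum_le (N k : ℕ) (p r : ℝ) (hp : 0 < p) (hr : 1 < r) (hkN : k ≤ N)
    (H : ∀ j : ℕ, j + 1 ≤ k → ((j : ℝ) + 1) * r ≤ ((N - j : ℕ) : ℝ) * p) :
    ∑ m ∈ range (k + 1), ((k : ℝ) - m) * ((N.choose m : ℝ) * p ^ m)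
      ≤ ((N.choose k : ℝ) * p ^ k) * ((1 / r) / (1 - 1 / r) ^ 2) := by
  set w : ℕ → ℝ := fun m => (N.choose m : ℝ) * p ^ m with hw
  have hw0 : ∀ m, 0 ≤ w m := fun m => by simp only [hw]; positivity
  have hratio : ∀ j : ℕ, j + 1 ≤ k → w j * r ≤ w (j + 1) := by
    intro j hj
    have hkey : ((N.choose (j+1) : ℝ)) * ((j : ℝ) + 1) = (N.choose j : ℝ) * ((N - j : ℕ) : ℝ) := by
      exact_mod_cast congrArg (Nat.cast : ℕ → ℝ) (Nat.choose_succ_right_eq N j)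
    have h1 : w j * r * ((j : ℝ) + 1) ≤ w (j+1) * ((j : ℝ) + 1) := by
      calc w j * r * ((j : ℝ) + 1) = w j * (((j : ℝ) + 1) * r) := by ring
        _ ≤ w j * (((N - j : ℕ) : ℝ) * p) :=
            mul_le_mul_of_nonneg_left (H j hj) (hw0 j)
        _ = ((N.choose j : ℝ) * ((N - j : ℕ) : ℝ)) * p ^ (j+1) := by
            simp only [hw]; ring
        _ = w (j+1) * ((j : ℝ) + 1) := by
            rw [← hkey]; simp only [hw]; ring
    exact le_of_mul_le_mul_right h1 (by positivity)
  have hdown : ∀ j : ℕ, j ≤ k → w (k - j) * r ^ j ≤ w k := by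
    intro j
    induction j with
    | zero => intro _; simp
    | succ n ih =>
      intro hn
      have hn' : n ≤ k := Nat.le_of_succ_le hn
      have hstep : w (k - (n+1)) * r ≤ w (k - n) := by
        have h1 : k - (n+1) + 1 = k - n := by omega
        have h2 := hratio (k - (n+1)) (by omega)
        rwa [h1] at h2
      calc w (k - (n+1)) * r ^ (n+1) = (w (k - (n+1)) * r) * r ^ n := by ring
        _ ≤ w (k - n) * r ^ n := mul_le_mul_of_nonneg_right hstep (by positivity)
        _ ≤ w k := ih hn'
  have hreflect : ∑ m ∈ range (k + 1), ((k : ℝ) - m) * w m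
      = ∑ j ∈ range (k + 1), (j : ℝ) * w (k - j) := by
    rw [← Finset.sum_range_reflect (fun m => ((k : ℝ) - m) * w m) (k+1)]
    refine Finset.sum_congr rfl fun j hj => ?_
    have hj' : j ≤ k := Nat.lt_succ_iff.mp (Finset.mem_range.mp hj)
    have h1 : k + 1 - 1 - j = k - j := by omega
    rw [h1]
    have h2 : ((k - j : ℕ) : ℝ) = (k : ℝ) - j := by
      rw [Nat.cast_sub hj']
    rw [h2]; ring
  have hrinv : ‖(1 / r : ℝ)‖ < 1 := by
    rw [Real.norm_eq_abs, abs_of_pos (by positivity), div_lt_one (by linarith)]; linarith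
  have htsum : HasSum (fun j : ℕ => (j : ℝ) * (1/r) ^ j) ((1/r) / (1 - 1/r)^2) :=
    hasSum_coe_mul_geometric_of_norm_lt_one hrinv
  calc ∑ m ∈ range (k + 1), ((k : ℝ) - m) * w m
      = ∑ j ∈ range (k + 1), (j : ℝ) * w (k - j) := hreflect
    _ ≤ ∑ j ∈ range (k + 1), w k * ((j : ℝ) * (1/r) ^ j) := by
        refine Finset.sum_le_sum fun j hj => ?_
        have hd := hdown j (Nat.lt_succ_iff.mp (Finset.mem_range.mp hj))
        have hrj : (0:ℝ) < r ^ j := by positivity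
        have hle : w (k - j) ≤ w k * (1/r)^j := by
          rw [one_div, inv_pow, ← div_eq_mul_inv, le_div_iff₀ hrj]
          exact hd
        calc (j : ℝ) * w (k - j) ≤ (j:ℝ) * (w k * (1/r)^j) :=
              mul_le_mul_of_nonneg_left hle (by positivity)
          _ = w k * ((j:ℝ) * (1/r)^j) := by ring
    _ = w k * ∑ j ∈ range (k+1), ((j : ℝ) * (1/r) ^ j) := by rw [Finset.mul_sum]
    _ ≤ w k * ((1/r) / (1 - 1/r)^2) := by
        refine mul_le_mul_of_nonneg_left ?_ (hw0 k)
        exact sum_le_hasSum _ (fun j _ => by positivity) htsum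

/-- If `k_N/N → q` with `0 < q < p_β`, the local excited-state probability `p_{k_N}` of the
reversible `N`-qubit state converges to `q` as `N → ∞`. -/
theorem pLocal_tendsto (β ω q : ℝ) (hβ : 0 < β) (hω : 0 < ω)
    (k : ℕ → ℕ) (hkN : ∀ N, k N ≤ N)
    (hq : 0 < q) (hqp : q < Real.exp (-β * ω) / (1 + Real.exp (-β * ω)))
    (hlim : Tendsto (fun N : ℕ => (k N : ℝ) / N) atTop (nhds q)) :
    Tendsto (fun N : ℕ => pLocal N (k N) β ω) atTop (nhds q) := by
  set p := Real.exp (-β * ω) with hpdef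
  have hp : 0 < p := Real.exp_pos _
  have hq1 : q < 1 := lt_of_lt_of_le hqp (by
    rw [div_le_one (by positivity)]; linarith)
  have hqb : q < p * (1 - q) := by
    have h := (lt_div_iff₀ (by positivity : (0:ℝ) < 1 + p)).mp hqp
    nlinarith
  set b := p * (1 - q) / q with hbdef
  have hb : 1 < b := (one_lt_div hq).mpr hqb
  set r := (1 + b) / 2 with hrdef
  have hr1 : 1 < r := by rw [hrdef]; linarith
  have hrb : r < b := by rw [hrdef]; linarith
  set c := r / p with hcdef
  have hc0 : 0 < c := by positivity
  have hcp : c * p = r := div_mul_cancel₀ r (ne_of_gt hp)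
  have hqc : q * (1 + c) < 1 := by
    have h1 : q * r < q * b := mul_lt_mul_of_pos_left hrb hq
    have h2 : (q * c) * p < (1 - q) * p := by
      calc (q*c)*p = q * (c*p) := by ring
        _ = q * r := by rw [hcp]
        _ < q * b := h1
        _ = (1 - q) * p := by rw [hbdef]; field_simp
    have h3 : q * c < 1 - q := lt_of_mul_lt_mul_right h2 hp.le
    nlinarith
  set C := (1/r) / (1 - 1/r)^2 with hCdef
  have hC0 : 0 ≤ C := by
    have : 1/r < 1 := by rw [div_lt_one (by linarith)]; linarith
    rw [hCdef]; positivity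
  have hexp : ∀ m : ℕ, Real.exp (-(m:ℝ) * β * ω) = p ^ m := fun m => by
    rw [hpdef, ← Real.exp_nat_mul]; congr 1; ring
  have hq_inv : q < 1 / (1 + c) := by
    rw [lt_div_iff₀ (by linarith)]; exact hqc
  have E1 : ∀ᶠ N : ℕ in atTop, (k N : ℝ) / N < 1 / (1 + c) :=
    hlim.eventually_lt_const hq_inv
  have E3 : ∀ᶠ N : ℕ in atTop, 1 ≤ N := eventually_ge_atTop 1
  have key : ∀ᶠ N : ℕ in atTop,
      ((k N : ℝ) - C) / N ≤ pLocal N (k N) β ω ∧ pLocal N (k N) β ω ≤ (k N : ℝ) / N := by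
    filter_upwards [E1, E3] with N h1 h3
    set K := k N with hKdef
    have hKN : K ≤ N := hkN N
    have hN0 : (0:ℝ) < N := by exact_mod_cast h3
    have hA : (K:ℝ) * (1 + c) < N := by
      have := (div_lt_div_iff₀ hN0 (by linarith : (0:ℝ) < 1 + c)).mp h1
      linarith
    have H : ∀ j : ℕ, j + 1 ≤ K → ((j:ℝ)+1) * r ≤ ((N - j : ℕ):ℝ) * p := by
      intro j hj
      have hjK : (j:ℝ) + 1 ≤ K := by exact_mod_cast hj
      have hjN : j ≤ N := by omega
      have hcast : ((N - j : ℕ):ℝ) = (N:ℝ) - j := by rw [Nat.cast_sub hjN]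
      rw [hcast]
      have hKexp : (K:ℝ)*(1+c) = (K:ℝ) + (K:ℝ)*c := by ring
      have h5 : (K:ℝ)*c + 1 ≤ (N:ℝ) - j := by linarith
      calc ((j:ℝ)+1)*r ≤ (K:ℝ)*r := mul_le_mul_of_nonneg_right hjK (by linarith)
        _ = (K:ℝ)*c*p := by rw [← hcp]; ring
        _ ≤ ((K:ℝ)*c + 1)*p := by nlinarith
        _ ≤ ((N:ℝ) - j)*p := mul_le_mul_of_nonneg_right h5 hp.le
    set S := ∑ m ∈ Finset.range (K+1), ((N.choose m:ℝ) * p ^ m) with hS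
    set T := ∑ m ∈ Finset.range (K+1), ((m:ℝ) * ((N.choose m:ℝ) * p ^ m)) with hT
    have hplocal : pLocal N K β ω = T / ((N:ℝ) * S) := by
      unfold pLocal
      rw [hT, hS]
      congr 1
      · exact Finset.sum_congr rfl fun m _ => by rw [hexp m]; ring
      · congr 1; exact Finset.sum_congr rfl fun m _ => by rw [hexp m]
    have hSpos : 0 < S := by
      rw [hS]
      refine Finset.sum_pos (fun m hm => ?_) ⟨0, Finset.mem_range.mpr (Nat.succ_pos K)⟩
      have hmN : m ≤ N := le_trans (Nat.lt_succ_iff.mp (Finset.mem_range.mp hm)) hKN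
      have hch : 0 < (N.choose m : ℝ) := by exact_mod_cast Nat.choose_pos hmN
      positivity
    have hNS : 0 < (N:ℝ) * S := mul_pos hN0 hSpos
    have hTle : T ≤ (K:ℝ) * S := by
      rw [hT, hS, Finset.mul_sum]
      refine Finset.sum_le_sum fun m hm => ?_
      have hmK : (m:ℝ) ≤ K := by exact_mod_cast Nat.lt_succ_iff.mp (Finset.mem_range.mp hm)
      have hwm : (0:ℝ) ≤ (N.choose m:ℝ) * p^m := by positivity
      exact mul_le_mul_of_nonneg_right hmK hwm
    have hgap : (K:ℝ) * S - T ≤ S * C := by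
      have h6 := gap_sum_le N K p r hp hr1 hKN H
      have h7 : (K:ℝ)*S - T = ∑ m ∈ Finset.range (K+1), ((K:ℝ) - m) * ((N.choose m:ℝ)*p^m) := by
        rw [hT, hS, Finset.mul_sum, ← Finset.sum_sub_distrib]
        exact Finset.sum_congr rfl fun m _ => by ring
      have h8 : (N.choose K:ℝ)*p^K ≤ S := by
        rw [hS]
        exact Finset.single_le_sum (f := fun m => (N.choose m:ℝ)*p^m)
          (fun m _ => by positivity) (Finset.mem_range.mpr (Nat.lt_succ_self K))
      have h9 : ((N.choose K:ℝ)*p^K) * C ≤ S * C := mul_le_mul_of_nonneg_right h8 hC0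
      rw [hCdef]
      calc (K:ℝ)*S - T = ∑ m ∈ Finset.range (K+1), ((K:ℝ) - m) * ((N.choose m:ℝ)*p^m) := h7
        _ ≤ ((N.choose K:ℝ)*p^K) * ((1/r)/(1-1/r)^2) := h6
        _ = ((N.choose K:ℝ)*p^K) * C := by rw [hCdef]
        _ ≤ S * C := h9
        _ = S * ((1/r)/(1-1/r)^2) := by rw [hCdef]
    constructor
    · rw [hplocal, div_le_div_iff₀ hN0 hNS]
      have h10 : ((K:ℝ) - C) * S ≤ T := by linarith
      have h11 : (((K:ℝ) - C) * S) * N ≤ T * N := mul_le_mul_of_nonneg_right h10 hN0.le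
      calc ((K:ℝ) - C) * ((N:ℝ)*S) = (((K:ℝ) - C) * S) * N := by ring
        _ ≤ T * N := h11
    · rw [hplocal, div_le_div_iff₀ hNS hN0]
      calc T * (N:ℝ) ≤ ((K:ℝ)*S) * N := mul_le_mul_of_nonneg_right hTle hN0.le
        _ = (K:ℝ) * ((N:ℝ)*S) := by ring
  have hlow : Tendsto (fun N : ℕ => ((k N:ℝ) - C)/N) atTop (nhds q) := by
    have h1 : Tendsto (fun N : ℕ => C/(N:ℝ)) atTop (nhds 0) :=
      tendsto_const_div_atTop_nhds_zero_nat C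
    have h2 := hlim.sub h1
    simpa [sub_div] using h2
  exact tendsto_of_tendsto_of_tendsto_of_le_of_le' hlow hlim
    (key.mono fun N h => h.1) (key.mono fun N h => h.2)
end

section
/- For a qubit with variable gap, in the joint limit ω₂/T_cold → 0 and ω₁/T_hot → ∞, the efficiency of the equilibrium-state cycle (A=(ω₁,T_hot), B=(ω₂,T_hot), C=(ω₂,T_cold), D=(ω₁,T_cold)) converges to the Carnot efficiency 1 - T_cold/T_hot. -/
open Filter Topology

/-- Thermal excited-state probability of a qubit with gap `ω` at temperature `T`. -/
noncomputable def pTh (ω T : ℝ) : ℝ := Real.exp (-ω / T) / (1 + Real.exp (-ω / T))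

/-- Average energy of a thermal qubit: `E = ω p`. -/
noncomputable def Eqb (ω T : ℝ) : ℝ := ω * pTh ω T

/-- Entropy of a thermal qubit: `S = -p log p - (1-p) log(1-p)`. -/
noncomputable def Sq (ω T : ℝ) : ℝ :=
  -(pTh ω T) * Real.log (pTh ω T) - (1 - pTh ω T) * Real.log (1 - pTh ω T)

/-- Efficiency of the equilibrium-state qubit cycle
`A = (ω₁, T_hot)`, `B = (ω₂, T_hot)`, `C = (ω₂, T_cold)`, `D = (ω₁, T_cold)`. -/
noncomputable def effCycle (Tc Th ω₁ ω₂ : ℝ) : ℝ :=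
  1 - (Tc * (Sq ω₁ Tc - Sq ω₂ Tc) + (Eqb ω₂ Tc - Eqb ω₂ Th)) /
      (Th * (Sq ω₁ Th - Sq ω₂ Th) + (Eqb ω₁ Tc - Eqb ω₁ Th))

set_option maxHeartbeats 1600000 in
/-- In the joint limit `ω₁/T_hot → ∞` and `ω₂/T_cold → 0⁺` (fixed temperatures
`0 < T_cold < T_hot`), the efficiency of the equilibrium-state qubit cycle converges to
the Carnot efficiency `1 - T_cold/T_hot`. -/
theorem effCycle_tendsto_carnot (Tc Th : ℝ) (hTc : 0 < Tc) (hT : Tc < Th) :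
    Tendsto (fun w : ℝ × ℝ => effCycle Tc Th w.1 w.2)
      (atTop ×ˢ nhdsWithin 0 (Set.Ioi 0)) (nhds (1 - Tc / Th)) := by
  have l2 : (0:ℝ) < Real.log 2 := Real.log_pos (by norm_num)
  have hSq : ∀ ω T, Sq ω T = Real.negMulLog (pTh ω T) + Real.negMulLog (1 - pTh ω T) := by
    intro ω T; simp [Sq, Real.negMulLog]; ring
  have hexp_pos : ∀ ω T : ℝ, (0:ℝ) < 1 + Real.exp (-ω / T) := fun ω T => by positivity
  -- pTh as ω → ∞
  have hp1 : ∀ T : ℝ, 0 < T → Tendsto (fun ω => pTh ω T) atTop (nhds 0) := by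
    intro T hTpos
    have h1 : Tendsto (fun ω : ℝ => -ω / T) atTop atBot := by
      have := tendsto_neg_atTop_atBot.comp (tendsto_id.atTop_div_const hTpos)
      simpa [Function.comp_def, neg_div] using this
    have h2 : Tendsto (fun ω : ℝ => Real.exp (-ω / T)) atTop (nhds 0) :=
      Real.tendsto_exp_atBot.comp h1
    have : Tendsto (fun ω => pTh ω T) atTop (nhds (0 / (1 + 0))) :=
      h2.div (tendsto_const_nhds.add h2) (by norm_num)
    simpa using this
  -- pTh as ω → 0⁺
  have hp2 : ∀ T : ℝ, 0 < T → Tendsto (fun ω => pTh ω T) (nhdsWithin 0 (Set.Ioi 0)) (nhds (1/2)) := by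
    intro T hTpos
    have hc : ContinuousAt (fun ω => pTh ω T) 0 := by
      apply ContinuousAt.div
      · exact (Real.continuous_exp.comp ((continuous_neg.div_const T))).continuousAt
      · exact (continuous_const.add (Real.continuous_exp.comp ((continuous_neg.div_const T)))).continuousAt
      · exact (hexp_pos 0 T).ne'
    have : pTh 0 T = 1 / 2 := by simp [pTh]; norm_num
    rw [← this]
    exact hc.continuousWithinAt.tendsto
  -- Sq as ω → ∞ : → 0
  have hS1 : ∀ T : ℝ, 0 < T → Tendsto (fun ω => Sq ω T) atTop (nhds 0) := by
    intro T hTpos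
    have := ((Real.continuous_negMulLog.tendsto 0).comp (hp1 T hTpos)).add
      ((Real.continuous_negMulLog.tendsto 1).comp
        (show Tendsto (fun ω => 1 - pTh ω T) atTop (nhds 1) by
          simpa using tendsto_const_nhds.sub (hp1 T hTpos)))
    simp only [Real.negMulLog_zero, Real.negMulLog_one, add_zero, sub_zero] at this
    refine Tendsto.congr (fun ω => (hSq ω T).symm) (by simpa using this)
  -- Sq as ω → 0⁺ : → log 2
  have hS2 : ∀ T : ℝ, 0 < T →
      Tendsto (fun ω => Sq ω T) (nhdsWithin 0 (Set.Ioi 0)) (nhds (Real.log 2)) := by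
    intro T hTpos
    have := ((Real.continuous_negMulLog.tendsto (1/2)).comp (hp2 T hTpos)).add
      ((Real.continuous_negMulLog.tendsto (1 - 1/2)).comp
        (show Tendsto (fun ω => 1 - pTh ω T) (nhdsWithin 0 (Set.Ioi 0)) (nhds (1 - 1/2)) from
          tendsto_const_nhds.sub (hp2 T hTpos)))
    have hval : Real.negMulLog (1/2) + Real.negMulLog (1 - 1/2) = Real.log 2 := by
      have : Real.log (1/2) = -Real.log 2 := by
        rw [one_div, Real.log_inv]
      norm_num [Real.negMulLog, this]
      ring
    rw [hval] at this
    exact Tendsto.congr (fun ω => (hSq ω T).symm) (by simpa using this)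
  -- Eqb as ω → ∞ : → 0
  have hE1 : ∀ T : ℝ, 0 < T → Tendsto (fun ω => Eqb ω T) atTop (nhds 0) := by
    intro T hTpos
    have key : Tendsto (fun ω : ℝ => ω * Real.exp (-ω / T)) atTop (nhds 0) := by
      have hdiv : Tendsto (fun ω : ℝ => ω / T) atTop atTop :=
        tendsto_id.atTop_div_const hTpos
      have h2 : Tendsto (fun x : ℝ => x ^ 1 * Real.exp (-x)) atTop (nhds 0) :=
        Real.tendsto_pow_mul_exp_neg_atTop_nhds_zero 1
      have h3 := (h2.comp hdiv).const_mul T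
      rw [mul_zero] at h3
      refine Tendsto.congr (fun ω => ?_) h3
      show T * ((ω / T) ^ 1 * Real.exp (-(ω / T))) = ω * Real.exp (-ω / T)
      have hω : T * (ω / T) = ω := by field_simp
      rw [pow_one, ← mul_assoc, hω, neg_div]
    have hden : Tendsto (fun ω : ℝ => 1 + Real.exp (-ω / T)) atTop (nhds (1 + 0)) := by
      have h1 : Tendsto (fun ω : ℝ => -ω / T) atTop atBot := by
        have := tendsto_neg_atTop_atBot.comp (tendsto_id.atTop_div_const hTpos)
        simpa [Function.comp_def, neg_div] using this
      exact tendsto_const_nhds.add (Real.tendsto_exp_atBot.comp h1)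
    have := key.div hden (by norm_num : (1:ℝ) + 0 ≠ 0)
    simp only [zero_div] at this
    refine Tendsto.congr (fun ω => ?_) this
    simp [Eqb, pTh, mul_div_assoc]
  -- Eqb as ω → 0⁺ : → 0
  have hE2 : ∀ T : ℝ, 0 < T →
      Tendsto (fun ω => Eqb ω T) (nhdsWithin 0 (Set.Ioi 0)) (nhds 0) := by
    intro T hTpos
    have hid : Tendsto (fun ω : ℝ => ω) (nhdsWithin 0 (Set.Ioi 0)) (nhds 0) :=
      tendsto_id.mono_right nhdsWithin_le_nhds
    have := hid.mul (hp2 T hTpos)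
    rw [zero_mul] at this
    exact this
  have hTh : 0 < Th := hTc.trans hT
  set F := (atTop : Filter ℝ) ×ˢ nhdsWithin (0:ℝ) (Set.Ioi 0)
  have hfst : Tendsto (fun w : ℝ × ℝ => w.1) F atTop := tendsto_fst
  have hsnd : Tendsto (fun w : ℝ × ℝ => w.2) F (nhdsWithin 0 (Set.Ioi 0)) := tendsto_snd
  have hNum : Tendsto (fun w : ℝ × ℝ =>
      Tc * (Sq w.1 Tc - Sq w.2 Tc) + (Eqb w.2 Tc - Eqb w.2 Th)) F
      (nhds (-(Tc * Real.log 2))) := by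
    have := (((((hS1 Tc hTc).comp hfst).sub ((hS2 Tc hTc).comp hsnd)).const_mul Tc).add
      (((hE2 Tc hTc).comp hsnd).sub ((hE2 Th hTh).comp hsnd)))
    simpa using this
  have hDen : Tendsto (fun w : ℝ × ℝ =>
      Th * (Sq w.1 Th - Sq w.2 Th) + (Eqb w.1 Tc - Eqb w.1 Th)) F
      (nhds (-(Th * Real.log 2))) := by
    have := (((((hS1 Th hTh).comp hfst).sub ((hS2 Th hTh).comp hsnd)).const_mul Th).add
      (((hE1 Tc hTc).comp hfst).sub ((hE1 Th hTh).comp hfst)))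
    simpa using this
  have hDne : -(Th * Real.log 2) ≠ 0 := neg_ne_zero.mpr (by positivity)
  have hratio := hNum.div hDen hDne
  have hval : -(Tc * Real.log 2) / -(Th * Real.log 2) = Tc / Th := by
    rw [neg_div_neg_eq]
    rw [mul_div_mul_right _ _ l2.ne']
  rw [hval] at hratio
  refine (tendsto_const_nhds.sub hratio).congr fun w => ?_
  simp [effCycle, Pi.div_apply]
end
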